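/- Let 0 < λ < 1 and set λ₊ = (1 + √λ)² and λ₋ = (1 − √λ)². Then the definite integral ∫_{λ₋}^{λ₊} √((λ₊ − x)(x − λ₋)) / x² dx equals 2πλ/(1 − λ). -/

import Mathlib

/-!
Put `p = 1 - √λ` and `q = 1 + √λ`, so that `λ₋ = p²`, `λ₊ = q²`, `q - p = 2√λ` and `pq = 1 - λ`.
For `0 < p < q` the integrand `√((q² - x)(x - p²)) / x²` has an elementary primitive: an algebraic
term and two arcsines, the second coming from the inversion `x ↦ p²q²/x`, which maps `[p², q²]` to
itself. Both arcsine arguments are `±1` at the endpoints, so the integral is `π (q - p)² / (2pq)`.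
-/

open Real Set

theorem HasDerivAt.arcsin_of_one_sub_sq_eq_sq {f : ℝ → ℝ} {f' x c : ℝ} (hf : HasDerivAt f f' x)
    (hc : 0 < c) (h : 1 - f x ^ 2 = c ^ 2) :
    HasDerivAt (fun y => arcsin (f y)) (f' / c) x := by
  have hne : ∀ t : ℝ, t ^ 2 = 1 → f x ≠ t := by
    rintro t ht rfl
    nlinarith
  have := (hasDerivAt_arcsin (hne (-1) (by norm_num)) (hne 1 (by norm_num))).comp x hf
  rwa [h, sqrt_sq hc.le, one_div_mul_eq_div] at this

namespace MarchenkoPastur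

variable {p q : ℝ}

/-- With `Q y = (q² - y)(y - p²)`, the arcsine arguments `u, v` satisfy
`1 - u² = 4 Q / (q² - p²)²` and `1 - v² = 4 p² q² Q / ((q² - p²) y)²`, which is what makes the
derivative collapse to `√Q / y²`. -/
noncomputable def primitive (p q y : ℝ) : ℝ :=
  -(√((q ^ 2 - y) * (y - p ^ 2)) / y) - arcsin ((2 * y - p ^ 2 - q ^ 2) / (q ^ 2 - p ^ 2))
    + (p ^ 2 + q ^ 2) / (2 * p * q)
      * arcsin ((p ^ 2 + q ^ 2 - 2 * p ^ 2 * q ^ 2 / y) / (q ^ 2 - p ^ 2))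

theorem hasDerivAt_primitive (hp : 0 < p) (hpq : p < q) {x : ℝ} (hx : x ∈ Ioo (p ^ 2) (q ^ 2)) :
    HasDerivAt (primitive p q) (√((q ^ 2 - x) * (x - p ^ 2)) / x ^ 2) x := by
  obtain ⟨hpx, hxq⟩ := hx
  have hx0 : 0 < x := lt_trans (by positivity) hpx
  have hq : 0 < q := hp.trans hpq
  have hd : 0 < q ^ 2 - p ^ 2 := by nlinarith
  have hQ : 0 < (q ^ 2 - x) * (x - p ^ 2) := mul_pos (by linarith) (by linarith)
  set s := √((q ^ 2 - x) * (x - p ^ 2))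
  have hs : 0 < s := sqrt_pos.mpr hQ
  have hs2 : s ^ 2 = (q ^ 2 - x) * (x - p ^ 2) := sq_sqrt hQ.le
  have hroot : HasDerivAt (fun y => √((q ^ 2 - y) * (y - p ^ 2)) / y)
      (((p ^ 2 + q ^ 2 - 2 * x) / (2 * s) * x - s) / x ^ 2) x := by
    have hquad : HasDerivAt (fun y => (q ^ 2 - y) * (y - p ^ 2)) (p ^ 2 + q ^ 2 - 2 * x) x :=
      (((hasDerivAt_id' x).const_sub (q ^ 2)).mul
        ((hasDerivAt_id' x).sub_const (p ^ 2))).congr_deriv (by ring)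
    exact ((hquad.sqrt hQ.ne').div (hasDerivAt_id' x) hx0.ne').congr_deriv (by ring)
  have hu : HasDerivAt (fun y => arcsin ((2 * y - p ^ 2 - q ^ 2) / (q ^ 2 - p ^ 2)))
      (2 / (q ^ 2 - p ^ 2) / (2 * s / (q ^ 2 - p ^ 2))) x := by
    refine HasDerivAt.arcsin_of_one_sub_sq_eq_sq ?_ (by positivity) ?_
    · exact (((((hasDerivAt_id' x).const_mul 2).sub_const (p ^ 2)).sub_const (q ^ 2)).div_const
        (q ^ 2 - p ^ 2)).congr_deriv (by ring)
    · field_simp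
      linear_combination (-4) * hs2
  have hv : HasDerivAt
      (fun y => arcsin ((p ^ 2 + q ^ 2 - 2 * p ^ 2 * q ^ 2 / y) / (q ^ 2 - p ^ 2)))
      (2 * p ^ 2 * q ^ 2 / x ^ 2 / (q ^ 2 - p ^ 2) / (2 * p * q * s / ((q ^ 2 - p ^ 2) * x)))
      x := by
    refine HasDerivAt.arcsin_of_one_sub_sq_eq_sq ?_ (by positivity) ?_
    · exact ((((hasDerivAt_inv hx0.ne').const_mul (2 * p ^ 2 * q ^ 2)).const_sub
        (p ^ 2 + q ^ 2)).div_const (q ^ 2 - p ^ 2)).congr_deriv (by ring)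
    · field_simp
      linear_combination (-4 * p ^ 2 * q ^ 2) * hs2
  refine ((hroot.neg.sub hu).add (hv.const_mul ((p ^ 2 + q ^ 2) / (2 * p * q)))).congr_deriv ?_
  field_simp
  ring

theorem continuousOn_primitive (hp : 0 < p) :
    ContinuousOn (primitive p q) (Icc (p ^ 2) (q ^ 2)) := by
  have hne : ∀ y ∈ Icc (p ^ 2) (q ^ 2), y ≠ 0 := fun y hy =>
    (lt_of_lt_of_le (by positivity) hy.1).ne'
  unfold primitive
  fun_prop (disch := exact hne)

theorem primitive_sq_right (hp : 0 < p) (hpq : p < q) :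
    primitive p q (q ^ 2) = π / 2 * ((p ^ 2 + q ^ 2) / (2 * p * q) - 1) := by
  have hq : 0 < q := hp.trans hpq
  have hd : q ^ 2 - p ^ 2 ≠ 0 := by nlinarith
  have hu : (2 * q ^ 2 - p ^ 2 - q ^ 2) / (q ^ 2 - p ^ 2) = 1 := by field_simp; ring
  have hv : (p ^ 2 + q ^ 2 - 2 * p ^ 2 * q ^ 2 / q ^ 2) / (q ^ 2 - p ^ 2) = 1 := by field_simp; ring
  simp only [primitive, hu, hv, sub_self, zero_mul, sqrt_zero, zero_div, arcsin_one]
  ring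

theorem primitive_sq_left (hp : 0 < p) (hpq : p < q) :
    primitive p q (p ^ 2) = -(π / 2 * ((p ^ 2 + q ^ 2) / (2 * p * q) - 1)) := by
  have hq : 0 < q := hp.trans hpq
  have hd : q ^ 2 - p ^ 2 ≠ 0 := by nlinarith
  have hu : (2 * p ^ 2 - p ^ 2 - q ^ 2) / (q ^ 2 - p ^ 2) = -1 := by field_simp; ring
  have hv : (p ^ 2 + q ^ 2 - 2 * p ^ 2 * q ^ 2 / p ^ 2) / (q ^ 2 - p ^ 2) = -1 := by
    field_simp; ring
  simp only [primitive, hu, hv, sub_self, mul_zero, sqrt_zero, zero_div, arcsin_neg_one]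
  ring

theorem integral_sqrt_mul_div_sq (hp : 0 < p) (hpq : p < q) :
    ∫ x in p ^ 2..q ^ 2, √((q ^ 2 - x) * (x - p ^ 2)) / x ^ 2 = π * (q - p) ^ 2 / (2 * p * q) := by
  have hle : p ^ 2 ≤ q ^ 2 := pow_le_pow_left₀ hp.le hpq.le 2
  have hint : IntervalIntegrable (fun x => √((q ^ 2 - x) * (x - p ^ 2)) / x ^ 2)
      MeasureTheory.volume (p ^ 2) (q ^ 2) := by
    have hne : ∀ y ∈ uIcc (p ^ 2) (q ^ 2), y ^ 2 ≠ 0 := fun y hy =>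
      pow_ne_zero 2 (lt_of_lt_of_le (by positivity) (uIcc_of_le hle ▸ hy).1).ne'
    exact ContinuousOn.intervalIntegrable (by fun_prop (disch := exact hne))
  rw [intervalIntegral.integral_eq_sub_of_hasDerivAt_of_le hle (continuousOn_primitive hp)
    (fun x hx => hasDerivAt_primitive hp hpq hx) hint, primitive_sq_right hp hpq,
    primitive_sq_left hp hpq]
  have hq : 0 < q := hp.trans hpq
  field_simp
  ring

end MarchenkoPastur

/-- For `0 < λ < 1` with Marchenko–Pastur edges `λ₊ = (1 + √λ)²` and
`λ₋ = (1 − √λ)²`, we have `∫_{λ₋}^{λ₊} √((λ₊ − x)(x − λ₋))/x² dx = 2πλ/(1 − λ)`. -/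
theorem mp_integral (lam : ℝ) (hlam0 : 0 < lam) (hlam1 : lam < 1)
    (lamPlus lamMinus : ℝ)
    (hPlus : lamPlus = (1 + Real.sqrt lam) ^ 2)
    (hMinus : lamMinus = (1 - Real.sqrt lam) ^ 2) :
    ∫ x in lamMinus..lamPlus,
        Real.sqrt ((lamPlus - x) * (x - lamMinus)) / x ^ 2
      = 2 * Real.pi * lam / (1 - lam) := by
  have hr0 : 0 < √lam := sqrt_pos.mpr hlam0
  have hr1 : √lam < 1 := (sqrt_lt' one_pos).mpr (by simpa using hlam1)
  have hsq : √lam ^ 2 = lam := sq_sqrt hlam0.le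
  have hwidth : (1 + √lam - (1 - √lam)) ^ 2 = 4 * lam := by linear_combination 4 * hsq
  have hprod : 2 * (1 - √lam) * (1 + √lam) = 2 * (1 - lam) := by linear_combination (-2) * hsq
  rw [hPlus, hMinus, MarchenkoPastur.integral_sqrt_mul_div_sq (by linarith) (by linarith),
    hwidth, hprod]
  have h1 : 1 - lam ≠ 0 := by linarith
  field_simp
  ring
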